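/- Let m, n ≥ 1 and let λ_i, α_i ∈ ℂ* for i = 0,…,m and μ_j, β_j ∈ ℂ* for j = 0,…,n, with λ_0,…,λ_m pairwise distinct and μ_0,…,μ_n pairwise distinct. Then the Virasoro modules ⊗_{i=0}^m Ω(λ_i,α_i) and ⊗_{j=0}^n Ω(μ_j,β_j) are isomorphic if and only if m = n and there exists a permutation σ of {0,1,…,m} such that (λ_i, α_i) = (μ_{σ(i)}, β_{σ(i)}) for all i = 0,1,…,m. -/

import Mathlib

/-!
Evaluate an intertwiner `φ` on `1`. Writing `g = φ 1 ≠ 0`, the identity `φ (L_k 1) = L_k g`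
evaluated at a point `y` reads `∑ λ_i^k A_i(k) = ∑ μ_j^k B_j(k)` for all `k ∈ ℕ`, where
`A_i(z) = φ(X_i)(y) - z α_i g(y)` and `B_j(z) = (y_j - z β_j) g(y - z e_j)` are polynomials in `z`.
Exponential polynomials with distinct nonzero bases are linearly independent (apply
`(E - a)^(deg + 1)`, `E` the shift, to kill one base and induct on the number of bases), so
`A_i = B_j` when `λ_i = μ_j` and each side vanishes when its base is unmatched. The `z = 0`
coefficients rule out unmatched bases, and comparing `z = 0` with `z = y_j / β_j` forces
`α_i = β_j`, because `y_j g(y)` is not identically zero. Conversely, renaming variables along `σ`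
is an isomorphism.
-/

/-- Substitution `X_i ↦ X_i - k` (in the variable `i` only) on `ℂ[X_0,…,X_{N-1}]`. -/
noncomputable def shiftVar {N : ℕ} (i : Fin N) (k : ℂ) :
    MvPolynomial (Fin N) ℂ →ₗ[ℂ] MvPolynomial (Fin N) ℂ :=
  (MvPolynomial.aeval fun j =>
    MvPolynomial.X j - if j = i then MvPolynomial.C k else 0).toLinearMap

/-- The operator `L_k` on `⊗_i Ω(λ_i,α_i) = ℂ[X_0,…,X_{N-1}]`. -/
noncomputable def omegaOp {N : ℕ} (lam al : Fin N → ℂ) (k : ℤ) :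
    MvPolynomial (Fin N) ℂ →ₗ[ℂ] MvPolynomial (Fin N) ℂ :=
  ∑ i : Fin N, (lam i ^ k) •
    ((LinearMap.mulLeft ℂ (MvPolynomial.X i - MvPolynomial.C ((k : ℂ) * al i))).comp
      (shiftVar i (k : ℂ)))

open scoped Polynomial

section ExpPoly
open Polynomial

/-- With `u k = x ^ k * p.eval k`, `x ^ k * (twistedDiff x a p).eval k = u (k + 1) - a * u k`. -/
noncomputable def twistedDiff (x a : ℂ) : ℂ[X] →ₗ[ℂ] ℂ[X] :=
  x • taylor (1 : ℂ) - a • LinearMap.id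

lemma eval_twistedDiff (x a z : ℂ) (p : ℂ[X]) :
    (twistedDiff x a p).eval z = x * p.eval (z + 1) - a * p.eval z := by
  simp [twistedDiff, taylor_eval]

lemma twistedDiff_injective {x a : ℂ} (h : x ≠ a) : Function.Injective (twistedDiff x a) := by
  refine (injective_iff_map_eq_zero _).2 fun p hp => ?_
  have hcoeff := congrArg (coeff · p.natDegree) hp
  simp only [twistedDiff, LinearMap.sub_apply, LinearMap.smul_apply, LinearMap.id_apply,
    coeff_sub, coeff_smul, coeff_taylor_natDegree, smul_eq_mul, coeff_zero] at hcoeff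
  have : (x - a) * p.leadingCoeff = 0 := by rw [sub_mul]; exact hcoeff
  exact leadingCoeff_eq_zero.1 ((mul_eq_zero.1 this).resolve_left (sub_ne_zero.2 h))

lemma eval_twistedDiff_self_pow (a : ℂ) (n : ℕ) (p : ℂ[X]) (z : ℂ) :
    ((twistedDiff a a ^ n) p).eval z = a ^ n * (fwdDiff 1)^[n] p.eval z := by
  induction n generalizing z with
  | zero => simp
  | succ n ih =>
    rw [pow_succ', Module.End.mul_apply, eval_twistedDiff, ih, ih, Function.iterate_succ_apply']
    simp only [fwdDiff]
    ring

lemma twistedDiff_self_pow_natDegree_succ (a : ℂ) (p : ℂ[X]) :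
    (twistedDiff a a ^ (p.natDegree + 1)) p = 0 :=
  Polynomial.funext fun z => by
    rw [eval_twistedDiff_self_pow]
    simp [fwdDiff_iter_degree_add_one_eq_zero]

def ExpPolyVanishes (s : Finset ℂ) (p : ℂ → ℂ[X]) : Prop :=
  ∀ k : ℕ, ∑ x ∈ s, x ^ k * (p x).eval (k : ℂ) = 0

lemma ExpPolyVanishes.map_twistedDiff {s : Finset ℂ} {p : ℂ → ℂ[X]} (h : ExpPolyVanishes s p)
    (a : ℂ) : ExpPolyVanishes s fun x => twistedDiff x a (p x) := fun k => by
  have e : ∀ x ∈ s, x ^ k * (twistedDiff x a (p x)).eval (k : ℂ)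
      = x ^ (k + 1) * (p x).eval ((k + 1 : ℕ) : ℂ) - a * (x ^ k * (p x).eval (k : ℂ)) :=
    fun x _ => by rw [eval_twistedDiff]; push_cast; ring
  rw [Finset.sum_congr rfl e, Finset.sum_sub_distrib, ← Finset.mul_sum, h, h, mul_zero, sub_zero]

lemma ExpPolyVanishes.map_twistedDiff_pow {s : Finset ℂ} {p : ℂ → ℂ[X]} (h : ExpPolyVanishes s p)
    (a : ℂ) (n : ℕ) : ExpPolyVanishes s fun x => (twistedDiff x a ^ n) (p x) := by
  induction n with
  | zero => simpa using h
  | succ n ih => simpa only [pow_succ', Module.End.mul_apply] using ih.map_twistedDiff a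

lemma eq_zero_of_forall_eval_natCast_eq_zero {p : ℂ[X]} (h : ∀ k : ℕ, p.eval (k : ℂ) = 0) :
    p = 0 :=
  p.eq_zero_of_infinite_isRoot <| Set.infinite_of_injective_forall_mem Nat.cast_injective h

theorem ExpPolyVanishes.eq_zero {s : Finset ℂ} (hs : (0 : ℂ) ∉ s) {p : ℂ → ℂ[X]}
    (h : ExpPolyVanishes s p) : ∀ x ∈ s, p x = 0 := by
  classical
  induction s using Finset.induction_on generalizing p with
  | empty => simp
  | insert a t ha ih =>
    have ha0 : a ≠ 0 := fun h0 => hs (h0 ▸ Finset.mem_insert_self a t)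
    set q := fun x => (twistedDiff x a ^ ((p a).natDegree + 1)) (p x)
    have hqa : q a = 0 := twistedDiff_self_pow_natDegree_succ a (p a)
    have hq : ExpPolyVanishes t q := fun k => by
      simpa [q, Finset.sum_insert ha, hqa] using h.map_twistedDiff_pow a ((p a).natDegree + 1) k
    have hpt : ∀ x ∈ t, p x = 0 := fun x hx => by
      have hinj := (twistedDiff_injective (ne_of_mem_of_not_mem hx ha)).iterate
        ((p a).natDegree + 1)
      rw [← Module.End.coe_pow] at hinj
      exact hinj ((ih (fun h0 => hs (Finset.mem_insert_of_mem h0)) hq x hx).trans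
        (map_zero _).symm)
    have hpa : p a = 0 := eq_zero_of_forall_eval_natCast_eq_zero fun k => by
      have := h k
      rw [Finset.sum_insert ha, Finset.sum_eq_zero fun x hx => by rw [hpt x hx, eval_zero, mul_zero],
        add_zero] at this
      exact (mul_eq_zero.1 this).resolve_left (pow_ne_zero k ha0)
    intro x hx
    rcases Finset.mem_insert.1 hx with rfl | hx
    · exact hpa
    · exact hpt x hx

theorem sum_ite_eq_of_sum_pow_mul_eval_eq {ι κ : Type*} [Fintype ι] [Fintype κ]
    {lam : ι → ℂ} {mu : κ → ℂ} (hlam : ∀ i, lam i ≠ 0) (hmu : ∀ j, mu j ≠ 0)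
    {p : ι → ℂ[X]} {q : κ → ℂ[X]}
    (h : ∀ k : ℕ, ∑ i, lam i ^ k * (p i).eval (k : ℂ) = ∑ j, mu j ^ k * (q j).eval (k : ℂ))
    (x : ℂ) : ∑ i, (if lam i = x then p i else 0) = ∑ j, (if mu j = x then q j else 0) := by
  classical
  set s := Finset.univ.image lam ∪ Finset.univ.image mu
  by_cases hx : x ∈ s
  · refine sub_eq_zero.1 (ExpPolyVanishes.eq_zero (p := fun x =>
      ∑ i, (if lam i = x then p i else 0) - ∑ j, (if mu j = x then q j else 0)) ?_ (fun k => ?_) x hx)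
    · simp [s, hlam, hmu]
    · simp only [eval_sub, eval_finsetSum, mul_sub, Finset.mul_sum, Finset.sum_sub_distrib]
      rw [Finset.sum_comm, Finset.sum_comm (s := s)]
      simp [apply_ite, s, h k]
  · simp only [s, Finset.mem_union, Finset.mem_image, Finset.mem_univ, true_and, not_or,
      not_exists] at hx
    simp [hx.1, hx.2]

end ExpPoly

section Modules
open MvPolynomial
variable {N : ℕ}

lemma eval_shiftVar (y : Fin N → ℂ) (j : Fin N) (z : ℂ) (f : MvPolynomial (Fin N) ℂ) :
    eval y (shiftVar j z f) = eval (y - Pi.single j z) f := by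
  rw [shiftVar, AlgHom.toLinearMap_apply, ← aeval_eq_eval, ← aeval_eq_eval, comp_aeval_apply]
  refine congrArg (aeval · f) (funext fun l => ?_)
  by_cases h : l = j <;> simp [h]

lemma eval_omegaOp (lam al : Fin N → ℂ) (k : ℤ) (f : MvPolynomial (Fin N) ℂ) (y : Fin N → ℂ) :
    eval y (omegaOp lam al k f)
      = ∑ i, lam i ^ k * ((y i - k * al i) * eval (y - Pi.single i (k : ℂ)) f) := by
  simp [omegaOp, eval_shiftVar]

lemma omegaOp_one (lam al : Fin N → ℂ) (k : ℤ) :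
    omegaOp lam al k 1 = ∑ i, lam i ^ k • (X i - (k * al i) • 1) := by
  simp [omegaOp, shiftVar, smul_eq_C_mul]

noncomputable def lineRestrict (y : Fin N → ℂ) (j : Fin N) (f : MvPolynomial (Fin N) ℂ) : ℂ[X] :=
  aeval (fun l => Polynomial.C (y l) - (Pi.single j Polynomial.X : Fin N → ℂ[X]) l) f

lemma eval_lineRestrict (y : Fin N → ℂ) (j : Fin N) (f : MvPolynomial (Fin N) ℂ) (z : ℂ) :
    (lineRestrict y j f).eval z = eval (y - Pi.single j z) f := by
  rw [lineRestrict, ← Polynomial.coe_aeval_eq_eval, comp_aeval_apply, ← aeval_eq_eval]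
  refine congrArg (aeval · f) (funext fun l => ?_)
  by_cases h : l = j <;> simp [h]

lemma exists_eval_mul_ne_zero {g : MvPolynomial (Fin N) ℂ} (hg : g ≠ 0) (j : Fin N) :
    ∃ y : Fin N → ℂ, y j * eval y g ≠ 0 := by
  by_contra! h
  exact mul_ne_zero (X_ne_zero j) hg (MvPolynomial.funext fun y => by simpa using h y)

lemma rename_omegaOp {M : ℕ} {lam al : Fin M → ℂ} {mu be : Fin N → ℂ} (σ : Fin M ≃ Fin N)
    (hσ : ∀ i, mu (σ i) = lam i ∧ be (σ i) = al i) (k : ℤ) (f : MvPolynomial (Fin M) ℂ) :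
    rename σ (omegaOp lam al k f) = omegaOp mu be k (rename σ f) := by
  refine MvPolynomial.funext fun y => ?_
  rw [eval_rename, eval_omegaOp, eval_omegaOp, ← Equiv.sum_comp σ]
  refine Finset.sum_congr rfl fun i _ => ?_
  rw [(hσ i).1, (hσ i).2, eval_rename]
  refine congrArg (fun w => lam i ^ k * ((y (σ i) - k * al i) * eval w f)) (funext fun l => ?_)
  simp [Pi.single_apply, σ.injective.eq_iff]

end Modules

section Intertwiner
open MvPolynomial
variable {M N : ℕ} {lam al : Fin M → ℂ} {mu be : Fin N → ℂ}
  {φ : MvPolynomial (Fin M) ℂ ≃ₗ[ℂ] MvPolynomial (Fin N) ℂ}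

lemma sum_pow_mul_eval_eq_of_intertwines
    (hφ : ∀ (k : ℤ) x, φ (omegaOp lam al k x) = omegaOp mu be k (φ x))
    (y : Fin N → ℂ) (K : ℕ) :
    ∑ i, lam i ^ K * (Polynomial.C (eval y (φ (X i)))
        - Polynomial.X * Polynomial.C (al i * eval y (φ 1))).eval (K : ℂ)
      = ∑ j, mu j ^ K * ((Polynomial.C (y j) - Polynomial.X * Polynomial.C (be j))
        * lineRestrict y j (φ 1)).eval (K : ℂ) := by
  have h := congrArg (eval y) (hφ K 1)
  rw [omegaOp_one, eval_omegaOp] at h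
  simp only [map_sum, map_smul, map_sub, smul_eval, Int.cast_natCast, zpow_natCast] at h
  simp only [Polynomial.eval_mul, Polynomial.eval_sub, Polynomial.eval_C, Polynomial.eval_X,
    eval_lineRestrict]
  convert h using 4
  ring

variable (hφ : ∀ (k : ℤ) x, φ (omegaOp lam al k x) = omegaOp mu be k (φ x))
  (hlam : ∀ i, lam i ≠ 0) (hmu : ∀ j, mu j ≠ 0)
include hφ hlam hmu

lemma exists_mu_eq_of_intertwines (hlaminj : Function.Injective lam) (i : Fin M) :
    ∃ j, mu j = lam i := by
  by_contra! hne
  refine X_ne_zero i (φ.injective ((MvPolynomial.funext fun y => ?_).trans (map_zero φ).symm))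
  have h := congrArg (Polynomial.eval 0)
    (sum_ite_eq_of_sum_pow_mul_eval_eq hlam hmu (sum_pow_mul_eval_eq_of_intertwines hφ y) (lam i))
  simpa [hlaminj.eq_iff, hne] using h

lemma exists_lam_eq_of_intertwines (hmuinj : Function.Injective mu) (j : Fin N) :
    ∃ i, lam i = mu j := by
  by_contra! hne
  have hg : φ 1 ≠ 0 := φ.map_ne_zero_iff.2 one_ne_zero
  obtain ⟨y, hy⟩ := exists_eval_mul_ne_zero hg j
  have h := congrArg (Polynomial.eval 0)
    (sum_ite_eq_of_sum_pow_mul_eval_eq hlam hmu (sum_pow_mul_eval_eq_of_intertwines hφ y) (mu j))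
  apply hy
  simpa [hmuinj.eq_iff, hne, eval_lineRestrict] using h.symm

lemma be_eq_al_of_intertwines (hbe : ∀ j, be j ≠ 0) (hlaminj : Function.Injective lam)
    (hmuinj : Function.Injective mu) {i : Fin M} {j : Fin N} (hij : mu j = lam i) :
    be j = al i := by
  by_contra hne
  have hg : φ 1 ≠ 0 := φ.map_ne_zero_iff.2 one_ne_zero
  obtain ⟨y, hy⟩ := exists_eval_mul_ne_zero hg j
  have h := sum_ite_eq_of_sum_pow_mul_eval_eq hlam hmu (sum_pow_mul_eval_eq_of_intertwines hφ y)
    (lam i)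
  simp only [hlaminj.eq_iff, Finset.sum_ite_eq', Finset.mem_univ, if_true] at h
  simp only [← hij, hmuinj.eq_iff, Finset.sum_ite_eq', Finset.mem_univ, if_true] at h
  have h0 := congrArg (Polynomial.eval 0) h
  have h1 := congrArg (Polynomial.eval (y j / be j)) h
  simp only [Polynomial.eval_sub, Polynomial.eval_C, Polynomial.eval_mul, Polynomial.eval_X,
    zero_mul, sub_zero, Polynomial.X_mul_C, mul_zero, eval_lineRestrict, Pi.single_zero,
    mul_div_cancel₀ _ (hbe j), sub_self] at h0 h1
  rw [h0] at h1
  apply hy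
  have h2 : y j * eval y (φ 1) * (1 - al i / be j) = 0 := by rw [← h1]; ring
  refine (mul_eq_zero.1 h2).resolve_right fun h3 => hne ?_
  exact ((div_eq_one_iff_eq (hbe j)).1 (sub_eq_zero.1 h3).symm).symm

end Intertwiner

lemma exists_equiv_apply_eq_of_range_eq {ι κ α : Type*} {f : ι → α} {g : κ → α}
    (hf : Function.Injective f) (hg : Function.Injective g) (h : Set.range f = Set.range g) :
    ∃ σ : ι ≃ κ, ∀ i, g (σ i) = f i :=
  ⟨(Equiv.ofInjective f hf).trans ((Equiv.setCongr h).trans (Equiv.ofInjective g hg).symm),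
    fun i => by simp [Equiv.apply_ofInjective_symm]⟩

theorem statement8_general (m n : ℕ)
    (lam al : Fin (m + 1) → ℂ) (mu be : Fin (n + 1) → ℂ)
    (hlam : ∀ i, lam i ≠ 0)
    (hmu : ∀ j, mu j ≠ 0) (hbe : ∀ j, be j ≠ 0)
    (hlaminj : Function.Injective lam) (hmuinj : Function.Injective mu) :
    (∃ φ : MvPolynomial (Fin (m + 1)) ℂ ≃ₗ[ℂ] MvPolynomial (Fin (n + 1)) ℂ,
        ∀ (k : ℤ) (x : MvPolynomial (Fin (m + 1)) ℂ),
          φ (omegaOp lam al k x) = omegaOp mu be k (φ x))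
    ↔ (m = n ∧ ∃ σ : Fin (m + 1) ≃ Fin (n + 1),
        ∀ i, mu (σ i) = lam i ∧ be (σ i) = al i) := by
  constructor
  · rintro ⟨φ, hφ⟩
    have hrange : Set.range lam = Set.range mu := Set.ext fun x =>
      ⟨fun ⟨i, hi⟩ => hi ▸ exists_mu_eq_of_intertwines hφ hlam hmu hlaminj i,
        fun ⟨j, hj⟩ => hj ▸ exists_lam_eq_of_intertwines hφ hlam hmu hmuinj j⟩
    obtain ⟨σ, hσ⟩ := exists_equiv_apply_eq_of_range_eq hlaminj hmuinj hrange
    refine ⟨by simpa using Fin.equiv_iff_eq.1 ⟨σ⟩, σ, fun i => ⟨hσ i, ?_⟩⟩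
    exact be_eq_al_of_intertwines hφ hlam hmu hbe hlaminj hmuinj (hσ i)
  · rintro ⟨rfl, σ, hσ⟩
    exact ⟨(MvPolynomial.renameEquiv ℂ σ).toLinearEquiv, rename_omegaOp σ hσ⟩

/-- **Lemma 4.1.** Let `m, n ≥ 1`, `λ_i, α_i ∈ ℂ*` (`i = 0,…,m`) and
`μ_j, β_j ∈ ℂ*` (`j = 0,…,n`), with `λ_0,…,λ_m` pairwise distinct and
`μ_0,…,μ_n` pairwise distinct. Then `⊗_{i=0}^m Ω(λ_i,α_i) ≅ ⊗_{j=0}^n Ω(μ_j,β_j)`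
if and only if `m = n` and there is a permutation `σ` with
`(λ_i,α_i) = (μ_{σ(i)}, β_{σ(i)})` for all `i`. -/
theorem statement8 (m n : ℕ) (hm : 1 ≤ m) (hn : 1 ≤ n)
    (lam al : Fin (m + 1) → ℂ) (mu be : Fin (n + 1) → ℂ)
    (hlam : ∀ i, lam i ≠ 0) (hal : ∀ i, al i ≠ 0)
    (hmu : ∀ j, mu j ≠ 0) (hbe : ∀ j, be j ≠ 0)
    (hlaminj : Function.Injective lam) (hmuinj : Function.Injective mu) :
    (∃ φ : MvPolynomial (Fin (m + 1)) ℂ ≃ₗ[ℂ] MvPolynomial (Fin (n + 1)) ℂ,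
        ∀ (k : ℤ) (x : MvPolynomial (Fin (m + 1)) ℂ),
          φ (omegaOp lam al k x) = omegaOp mu be k (φ x))
    ↔ (m = n ∧ ∃ σ : Fin (m + 1) ≃ Fin (n + 1),
        ∀ i, mu (σ i) = lam i ∧ be (σ i) = al i) :=
  statement8_general m n lam al mu be hlam hmu hbe hlaminj hmuinj
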